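/- arXiv:2103.06914 — 2 statements merged into one kernel-verified Lean document; each statement's English description precedes it below -/
import Mathlib

section
/- The 3×3 matrix [[e^{2πi/3},1,1],[1,e^{2πi/3},1],[1,1,e^{2πi/3}]] equals (√3·e^{iπ/6}) times the qutrit X-phase gate X(2π/3, 2π/3), where X(α,β) = (1/3)·Σ-form with entries (1/3)(1 + ω^{j−i}e^{iα} + ω^{i−j}e^{iβ}) for ω = e^{2πi/3}. -/
open Complex Matrix

noncomputable def qutritOmega : ℂ := Complex.exp (2 * Real.pi * Complex.I / 3)

/-- The qutrit X-phase gate X(α,β). -/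
noncomputable def qutritXPhase (α β : ℝ) : Matrix (Fin 3) (Fin 3) ℂ :=
  let ea : ℂ := Complex.exp (α * Complex.I)
  let eb : ℂ := Complex.exp (β * Complex.I)
  let ω : ℂ := qutritOmega
  (1 / 3 : ℂ) •
    !![1 + ea + eb,           1 + ω^2 * ea + ω * eb,  1 + ω * ea + ω^2 * eb;
       1 + ω * ea + ω^2 * eb, 1 + ea + eb,            1 + ω^2 * ea + ω * eb;
       1 + ω^2 * ea + ω * eb, 1 + ω * ea + ω^2 * eb,  1 + ea + eb]

/-- The d = 3 ±-box is √3·e^{iπ/6} times the qutrit stabilizer gate X(2π/3, 2π/3). -/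
theorem pm_box_d3_is_stabilizer :
    !![qutritOmega, 1, 1; 1, qutritOmega, 1; 1, 1, qutritOmega] =
      ((Real.sqrt 3 : ℂ) * Complex.exp ((Real.pi / 6 : ℝ) * Complex.I)) •
        qutritXPhase (2 * Real.pi / 3) (2 * Real.pi / 3) := by
  have h3 : (Real.sqrt 3 : ℂ) * (Real.sqrt 3 : ℂ) = 3 := by
    norm_cast
    rw [Real.mul_self_sqrt (by norm_num : (0:ℝ) ≤ 3)]
  have key : ∀ x : ℝ, Complex.exp ((x : ℂ) * Complex.I)
      = (Real.cos x : ℂ) + (Real.sin x : ℂ) * Complex.I := by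
    intro x
    rw [Complex.exp_mul_I, Complex.ofReal_cos, Complex.ofReal_sin]
  have hcos : Real.cos (2*Real.pi/3) = -(1/2) := by
    rw [show 2*Real.pi/3 = Real.pi - Real.pi/3 by ring, Real.cos_pi_sub,
      Real.cos_pi_div_three]
  have hsin : Real.sin (2*Real.pi/3) = Real.sqrt 3 / 2 := by
    rw [show 2*Real.pi/3 = Real.pi - Real.pi/3 by ring, Real.sin_pi_sub,
      Real.sin_pi_div_three]
  have hω : qutritOmega = (-(1/2) : ℂ) + ((Real.sqrt 3 : ℂ)/2) * Complex.I := by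
    rw [qutritOmega, show (2 * (Real.pi:ℂ) * Complex.I / 3) = ((2*Real.pi/3 : ℝ) : ℂ) * Complex.I
      by push_cast; ring, key, hcos, hsin]
    push_cast
    ring
  have hs : Complex.exp (((Real.pi / 6 : ℝ) : ℂ) * Complex.I)
      = ((Real.sqrt 3 : ℂ)/2) + (1/2 : ℂ) * Complex.I := by
    rw [key, Real.cos_pi_div_six, Real.sin_pi_div_six]
    push_cast
    ring
  have hea : Complex.exp (((2 * Real.pi / 3 : ℝ) : ℂ) * Complex.I) = qutritOmega := by
    rw [qutritOmega, show (2 * (Real.pi:ℂ) * Complex.I / 3) = ((2*Real.pi/3 : ℝ) : ℂ) * Complex.I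
      by push_cast; ring]
  set s : ℂ := (Real.sqrt 3 : ℂ) with hsdef
  simp only [qutritXPhase]
  rw [hea, hs, hω]
  ext i j
  fin_cases i <;> fin_cases j <;>
    simp [Matrix.smul_apply, Matrix.vecHead, Matrix.vecTail, Function.comp] <;>
    first
    | linear_combination (-(Complex.I^2)/6 - s*Complex.I/6) * h3 + (-1/2 : ℂ) * Complex.I_sq
    | linear_combination
        ((-3/16 : ℂ) + Complex.I^2/12 - Complex.I^4/16 + s*Complex.I/48 - s*Complex.I^3/24
          + s^2*Complex.I^2/48 - s^2*Complex.I^4/48 - s^3*Complex.I^3/48) * h3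
        + ((7/16 : ℂ) - 3*Complex.I^2/16 - s*Complex.I/8) * Complex.I_sq
end

section
/- For d = 3, the matrix A = J − I (all-ones minus identity, i.e. entries 1 − δ_{ij}) is not, up to a nonzero scalar, equal to H·Z(2πa/3, 2πb/3)·H for any a, b ∈ {0,1,2}, where H is the 3×3 Fourier matrix and Z(α,β) = diag(1, e^{iα}, e^{iβ}). Equivalently, there is no λ ∈ ℂ, λ ≠ 0, and a,b ∈ {0,1,2} with A = λ·H·Z(2πa/3, 2πb/3)·H. -/
open Complex Matrix

noncomputable def qutritHadamard : Matrix (Fin 3) (Fin 3) ℂ :=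
  (1 / Real.sqrt 3 : ℂ) •
    !![1, 1, 1;
       1, qutritOmega, qutritOmega ^ 2;
       1, qutritOmega ^ 2, qutritOmega]

noncomputable def qutritZPhase (α β : ℝ) : Matrix (Fin 3) (Fin 3) ℂ :=
  Matrix.diagonal ![1, Complex.exp (α * Complex.I), Complex.exp (β * Complex.I)]

private lemma omega_pow_three : qutritOmega ^ 3 = 1 := by
  unfold qutritOmega
  rw [← Complex.exp_nat_mul]
  rw [show (3:ℕ) * (2 * Real.pi * Complex.I / 3) = 2*Real.pi*Complex.I by push_cast; ring]
  exact Complex.exp_two_pi_mul_I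

private lemma omega_ne_one : qutritOmega ≠ 1 := by
  unfold qutritOmega
  intro h
  rw [Complex.exp_eq_one_iff] at h
  obtain ⟨n, hn⟩ := h
  have h2 : (2:ℂ) * Real.pi * Complex.I ≠ 0 := by
    simp [Real.pi_ne_zero, Complex.I_ne_zero]
  have : (3:ℂ) * n = 1 := by
    field_simp at hn
    have key : ((3:ℂ)*n) * (2*Real.pi*Complex.I) = (1:ℂ) * (2*Real.pi*Complex.I) := by
      linear_combination (-(2*Real.pi*Complex.I)) * hn
    simpa using mul_right_cancel₀ h2 key
  have : (3*n : ℤ) = 1 := by exact_mod_cast this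
  omega

private lemma omega_sum : 1 + qutritOmega + qutritOmega^2 = 0 := by
  have h3 := omega_pow_three
  have h1 : qutritOmega - 1 ≠ 0 := sub_ne_zero.mpr omega_ne_one
  have h : (qutritOmega - 1) * (1 + qutritOmega + qutritOmega^2) = 0 := by
    rw [show (qutritOmega - 1) * (1 + qutritOmega + qutritOmega^2)
        = qutritOmega^3 - 1 by ring, h3]; ring
  exact (mul_eq_zero.mp h).resolve_left h1

private lemma exp_eq_pow' (n : ℕ) :
    Complex.exp (2 * (Real.pi:ℂ) * (n:ℂ) / 3 * Complex.I) = qutritOmega ^ n := by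
  unfold qutritOmega
  rw [← Complex.exp_nat_mul]
  congr 1
  ring

/-- The d = 3 colouring edge matrix J − I is not, up to a nonzero scalar,
    any stabilizer X-spider H·Z(2πa/3, 2πb/3)·H. -/
theorem colouring_edge_d3_not_stabilizer :
    ¬ ∃ (lam : ℂ) (a b : Fin 3), lam ≠ 0 ∧
      (Matrix.of fun i j : Fin 3 => (1 : ℂ) - if i = j then 1 else 0) =
        lam • (qutritHadamard *
          qutritZPhase (2 * Real.pi * (a : ℕ) / 3) (2 * Real.pi * (b : ℕ) / 3) *
          qutritHadamard) := by
  rintro ⟨lam, a, b, hlam, h⟩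
  rw [← Matrix.ext_iff] at h
  have h00 := h 0 0
  have h01 := h 0 1
  have h02 := h 0 2
  have hs : ((Real.sqrt 3 : ℝ) : ℂ) ≠ 0 := by
    exact_mod_cast (Real.sqrt_pos.mpr (by norm_num : (0:ℝ) < 3)).ne'
  simp [qutritHadamard, qutritZPhase, Matrix.mul_apply, Fin.sum_univ_three,
    Matrix.smul_apply, Matrix.diagonal_apply, exp_eq_pow', smul_eq_mul,
    Matrix.vecMul, dotProduct] at h00 h01 h02
  have h00' := h00.resolve_left hlam
  have hmul : ((Real.sqrt 3 : ℝ) : ℂ) * ((Real.sqrt 3 : ℝ) : ℂ) = 3 := by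
    exact_mod_cast Real.mul_self_sqrt (by norm_num : (0:ℝ) ≤ 3)
  field_simp at h00' h01 h02
  rw [← sq] at hmul
  rw [hmul] at h01 h02
  have hsum := omega_sum
  have hw3 := omega_pow_three
  fin_cases a <;> fin_cases b <;>
    simp only [Fin.val_zero, Fin.val_one, pow_zero, pow_one] at h00' h01 h02
  -- (0,0)
  · norm_num at h00'
  -- (0,1)
  · have : (3:ℂ) = 0 := by linear_combination hsum - (qutritOmega - 1) * h00'
    norm_num at this
  -- (0,2)
  · exact omega_ne_one (by linear_combination hsum - h00')
  -- (1,0)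
  · have : (3:ℂ) = 0 := by linear_combination hsum - (qutritOmega - 1) * h00'
    norm_num at this
  -- (1,1)
  · have : (3:ℂ) = 0 := by linear_combination 4*hsum - (2*qutritOmega + 1) * h00'
    norm_num at this
  -- (1,2)
  · have : (3:ℂ) = 0 := by
      linear_combination h01 + lam * (qutritOmega^2 - qutritOmega + 1) * hsum
    norm_num at this
  -- (2,0)
  · exact omega_ne_one (by linear_combination hsum - h00')
  -- (2,1)
  · have : (3:ℂ) = 0 := by
      linear_combination h02 + lam * (qutritOmega^2 - qutritOmega + 1) * hsum
    norm_num at this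
  -- (2,2)
  · have : (3:ℂ) = 0 := by
      linear_combination (2 - 4*qutritOmega)*hsum + (2*qutritOmega + 1) * h00'
    norm_num at this
end
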